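/- (Example 1.8, conclusion) Suppose 𝒵₀ = {ς_i, −ς_i, 2ς_i, −2ς_i : i = 1, …, d} and c_𝕜 = (√n₁, …, √n_d) where n₁, …, n_d are pairwise distinct squarefree positive integers (the vectors c_1, …, c_{𝕜−1} ∈ ℝ^d being arbitrary). Then 𝒵_∞ = ℤ^d \ {0}, and in particular the Hörmander-type condition (Condition 1.1) holds: ℤ^d \ 𝒵_∞ ⊆ A^⊥. -/

import Mathlib

open scoped BigOperators

/-- Euclidean pairing `⟨c, k⟩ = ∑ i, c i * k i` between a real vector and an
integer vector. -/
noncomputable def pairing {d : ℕ} (c : Fin d → ℝ) (k : Fin d → ℤ) : ℝ :=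
  ∑ i, c i * (k i : ℝ)

/-- `A^⊥ = {k ∈ ℤ^d : ⟨c_j, k⟩ = 0 for all j = 1, …, 𝕜}`. -/
def Aperp {d : ℕ} (kk : ℕ) (c : ℕ → Fin d → ℝ) : Set (Fin d → ℤ) :=
  {k | ∀ j : ℕ, 1 ≤ j → j ≤ kk → pairing (c j) k = 0}

/-- The set `𝕃` of sums of exactly `kk - 1` elements of `Z0`. -/
def Lset {d : ℕ} (kk : ℕ) (Z0 : Set (Fin d → ℤ)) : Set (Fin d → ℤ) :=
  {l | ∃ f : Fin (kk - 1) → (Fin d → ℤ), (∀ i, f i ∈ Z0) ∧ l = ∑ i, f i}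

/-- The recursively defined sets `𝒵ₙ`. -/
def Zn {d : ℕ} (kk : ℕ) (ck : Fin d → ℝ) (Z0 : Set (Fin d → ℤ)) :
    ℕ → Set (Fin d → ℤ)
  | 0 => Z0
  | n + 1 =>
      {x | ∃ κ ∈ Zn kk ck Z0 n, ∃ l ∈ Lset kk Z0, x = κ + l ∧ pairing ck x ≠ 0}

/-- `𝒵_∞ = ⋃ n, 𝒵ₙ`. -/
def Zinf {d : ℕ} (kk : ℕ) (ck : Fin d → ℝ) (Z0 : Set (Fin d → ℤ)) :
    Set (Fin d → ℤ) :=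
  ⋃ n : ℕ, Zn kk ck Z0 n

/-- The standard noise set `𝒵₀ = {ς_i, −ς_i, 2ς_i, −2ς_i : i = 1, …, d}`,
where `ς_i` is the `i`-th standard basis vector. -/
def stdZ0 (d : ℕ) : Set (Fin d → ℤ) :=
  {k | ∃ i : Fin d,
    k = Pi.single i 1 ∨ k = -Pi.single i 1 ∨ k = Pi.single i 2 ∨ k = -Pi.single i 2}


/-!
The coordinates `√nᵢ` of `c_𝕜` are linearly independent over `ℚ`, so `⟨c_𝕜, k⟩ ≠ 0` for every
nonzero `k ∈ ℤ^d`. This is proved by induction over the primes dividing the `nᵢ`: with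
`K_S = ℚ(√q : q ∈ S)`, every element of `K_{S ∪ {p}}` is `a + b√p` with `a, b ∈ K_S`, and
`√p ∉ K_S`; splitting a vanishing combination according to whether `p ∣ nᵢ` gives two
vanishing combinations over `K_S`.

Since `𝕜 ≥ 2`, both `𝒵₀` and `𝕃` contain `±ςᵢ` (`ςᵢ` is a sum of `𝕜 - 1` elements of `𝒵₀`,
using `ςᵢ = 2ςᵢ - ςᵢ` and cancelling pairs `ςᵢ - ςᵢ`). So `𝒵_∞ ∪ {0}` is closed under
`y ↦ y ± ςᵢ`: a step never lands on the hyperplane `⟨c_𝕜, ·⟩ = 0` except at `0`. Hence it is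
all of `ℤ^d`, while `0 ∉ 𝒵_∞` because `0 ∉ 𝒵₀` and later points have `⟨c_𝕜, ·⟩ ≠ 0`.
-/

theorem Subfield.exists_eq_add_mul_of_mem_closure_insert {L : Type*} [Field L] {K : Subfield L}
    {s : L} (hs : s * s ∈ K) {x : L} (hx : x ∈ Subfield.closure (insert s (K : Set L))) :
    ∃ a ∈ K, ∃ b ∈ K, x = a + b * s := by
  by_cases hsK : s ∈ K
  · exact ⟨x, Subfield.closure_le.2 (Set.insert_subset hsK le_rfl) hx, 0, zero_mem K, by simp⟩
  induction hx using Subfield.closure_induction with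
  | mem y hy =>
    rcases hy with rfl | hy
    · exact ⟨0, zero_mem K, 1, one_mem K, by simp⟩
    · exact ⟨y, hy, 0, zero_mem K, by simp⟩
  | one => exact ⟨1, one_mem K, 0, zero_mem K, by simp⟩
  | add _ _ _ _ hx hy =>
    obtain ⟨a, ha, b, hb, rfl⟩ := hx
    obtain ⟨a', ha', b', hb', rfl⟩ := hy
    exact ⟨a + a', add_mem ha ha', b + b', add_mem hb hb', by ring⟩
  | neg _ _ hx =>
    obtain ⟨a, ha, b, hb, rfl⟩ := hx
    exact ⟨-a, neg_mem ha, -b, neg_mem hb, by ring⟩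
  | mul _ _ _ _ hx hy =>
    obtain ⟨a, ha, b, hb, rfl⟩ := hx
    obtain ⟨a', ha', b', hb', rfl⟩ := hy
    refine ⟨a * a' + b * b' * (s * s), ?_, a * b' + b * a', ?_, by ring⟩
    · exact add_mem (mul_mem ha ha') (mul_mem (mul_mem hb hb') hs)
    · exact add_mem (mul_mem ha hb') (mul_mem hb ha')
  | inv _ _ hx =>
    obtain ⟨a, ha, b, hb, rfl⟩ := hx
    rcases eq_or_ne (a + b * s) 0 with h0 | h0
    · exact ⟨0, zero_mem K, 0, zero_mem K, by simp [h0]⟩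
    have hconj : a - b * s ≠ 0 := by
      intro hc
      rcases eq_or_ne b 0 with rfl | hb0
      · simp_all
      · refine hsK ?_
        rw [show s = a / b by field_simp; linear_combination -hc]
        exact div_mem ha hb
    set N := a * a - b * b * (s * s)
    have hN : N = (a + b * s) * (a - b * s) := by ring
    have hNK : N ∈ K := sub_mem (mul_mem ha ha) (mul_mem (mul_mem hb hb) hs)
    refine ⟨a / N, div_mem ha hNK, -b / N, div_mem (neg_mem hb) hNK, ?_⟩
    rw [hN]
    field_simp
    ring

theorem Real.sqrt_natCast_eq_sqrt_mul_sqrt_div {n p : ℕ} (hpn : p ∣ n) :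
    √(n : ℝ) = √(p : ℝ) * √((n / p : ℕ) : ℝ) := by
  rw [← Real.sqrt_mul (Nat.cast_nonneg p)]
  exact_mod_cast congrArg (fun m : ℕ => √(m : ℝ)) (Nat.mul_div_cancel' hpn).symm

theorem Nat.primeFactors_subset_of_not_dvd {n p : ℕ} {S : Finset ℕ}
    (hn : n.primeFactors ⊆ insert p S) (hpn : ¬p ∣ n) : n.primeFactors ⊆ S := by
  intro q hq
  refine (Finset.mem_insert.1 (hn hq)).resolve_left ?_
  rintro rfl
  exact hpn (Nat.dvd_of_mem_primeFactors hq)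

theorem Squarefree.primeFactors_div_subset {n p : ℕ} {S : Finset ℕ} (hsf : Squarefree n)
    (hpn : p ∣ n) (hn : n.primeFactors ⊆ insert p S) : (n / p).primeFactors ⊆ S := by
  intro q hq
  refine (Finset.mem_insert.1
    (hn (Nat.primeFactors_mono (Nat.div_dvd_of_dvd hpn) hsf.ne_zero hq))).resolve_left ?_
  rintro rfl
  exact (Nat.prime_of_mem_primeFactors hq).not_isUnit
    (hsf q (Nat.mul_dvd_of_dvd_div hpn (Nat.dvd_of_mem_primeFactors hq)))

noncomputable def sqrtField (S : Finset ℕ) : Subfield ℝ :=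
  Subfield.closure ((fun p : ℕ => √(p : ℝ)) '' S)

theorem sqrt_mem_sqrtField {S : Finset ℕ} {m : ℕ} (hm : m.primeFactors ⊆ S) :
    √(m : ℝ) ∈ sqrtField S := by
  induction m using induction_on_primes with
  | zero => simp
  | one => simp [one_mem]
  | prime_mul p a hp ih =>
    rcases eq_or_ne a 0 with rfl | ha
    · simp
    rw [Nat.primeFactors_mul hp.ne_zero ha, hp.primeFactors, Finset.singleton_union,
      Finset.insert_subset_iff] at hm
    push_cast
    rw [Real.sqrt_mul (Nat.cast_nonneg p)]
    exact mul_mem (Subfield.subset_closure ⟨p, hm.1, rfl⟩) (ih hm.2)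

theorem sqrtField_insert_le (p : ℕ) (S : Finset ℕ) :
    sqrtField (insert p S) ≤ Subfield.closure (insert √(p : ℝ) (sqrtField S : Set ℝ)) := by
  rw [sqrtField, Finset.coe_insert, Set.image_insert_eq]
  exact Subfield.closure_mono (Set.insert_subset_insert Subfield.subset_closure)

/- Stated for an odd valuation rather than for squarefree `m`, so that the induction can pass
from `m` to `m * p`. -/
theorem sqrt_notMem_sqrtField {S : Finset ℕ} (hS : ∀ p ∈ S, p.Prime) {q m : ℕ} (hqS : q ∉ S)
    (hodd : Odd (m.factorization q)) : √(m : ℝ) ∉ sqrtField S := by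
  induction S using Finset.induction_on generalizing q m with
  | empty =>
    intro hm
    obtain ⟨r, rfl⟩ : IsSquare m := by
      have hbot : sqrtField ∅ ≤ (Rat.castHom ℝ).fieldRange :=
        Subfield.closure_le.2 (by simp)
      obtain ⟨x, hx⟩ := RingHom.mem_fieldRange.1 (hbot hm)
      by_contra h
      exact irrational_sqrt_natCast_iff.2 h ⟨x, hx⟩
    rcases eq_or_ne r 0 with rfl | hr
    · simp at hodd
    rw [← sq, Nat.factorization_pow] at hodd
    exact Nat.not_odd_iff_even.2 (even_two_mul _) hodd
  | insert p S hpS ih =>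
    intro hm
    have hp : p.Prime := hS p (Finset.mem_insert_self p S)
    have hS' : ∀ r ∈ S, r.Prime := fun r hr => hS r (Finset.mem_insert_of_mem hr)
    have hqS' : q ∉ S := fun h => hqS (Finset.mem_insert_of_mem h)
    have hqp : q ≠ p := fun h => hqS (h ▸ Finset.mem_insert_self p S)
    have hsqp : √(p : ℝ) * √(p : ℝ) = p := Real.mul_self_sqrt (Nat.cast_nonneg p)
    have hsqm : √(m : ℝ) * √(m : ℝ) = m := Real.mul_self_sqrt (Nat.cast_nonneg m)
    have hpK : √(p : ℝ) ∉ sqrtField S := ih hS' hpS (by simp [hp.factorization_self])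
    obtain ⟨a, ha, b, hb, hab⟩ := Subfield.exists_eq_add_mul_of_mem_closure_insert
      (by rw [hsqp]; exact natCast_mem _ p) (sqrtField_insert_le p S hm)
    -- squaring `√m = a + b √p` puts `2ab √p` in `sqrtField S`
    have hab0 : a * b = 0 := by
      by_contra h
      apply hpK
      have : √(p : ℝ) = (m - a * a - b * b * p) / (2 * (a * b)) := by
        rw [eq_div_iff (mul_ne_zero two_ne_zero h)]
        linear_combination (-(b * b)) * hsqp + hsqm - (√(m : ℝ) + a + b * √(p : ℝ)) * hab
      rw [this]
      exact div_mem (sub_mem (sub_mem (natCast_mem _ m) (mul_mem ha ha))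
        (mul_mem (mul_mem hb hb) (natCast_mem _ p))) (mul_mem (ofNat_mem _ 2) (mul_mem ha hb))
    rcases mul_eq_zero.1 hab0 with rfl | rfl
    · have hm0 : m ≠ 0 := by rintro rfl; simp at hodd
      refine ih hS' hqS' (m := m * p) ?_ ?_
      · rwa [Nat.factorization_mul hm0 hp.ne_zero, Finsupp.add_apply, hp.factorization,
          Finsupp.single_eq_of_ne hqp, add_zero]
      · push_cast
        rw [Real.sqrt_mul (Nat.cast_nonneg m), hab, zero_add, mul_assoc, hsqp]
        exact mul_mem hb (natCast_mem _ p)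
    · exact ih hS' hqS' hodd (by rwa [hab, zero_mul, add_zero])

theorem eq_zero_and_eq_zero_of_add_sqrt_mul_eq_zero {S : Finset ℕ} (hS : ∀ q ∈ S, q.Prime)
    {p : ℕ} (hp : p.Prime) (hpS : p ∉ S) {A B : ℝ} (hA : A ∈ sqrtField S)
    (hB : B ∈ sqrtField S) (h : A + √(p : ℝ) * B = 0) : A = 0 ∧ B = 0 := by
  have hB0 : B = 0 := by
    by_contra hB0
    refine sqrt_notMem_sqrtField hS hpS (m := p) (by simp [hp.factorization_self]) ?_
    rw [show √(p : ℝ) = -A / B by field_simp; linear_combination h]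
    exact div_mem (neg_mem hA) hB
  exact ⟨by simpa [hB0] using h, hB0⟩

theorem sum_mul_sqrt_eq_add_sqrt_mul {ι : Type*} (p : ℕ) (s : Finset ι) (f : ι → ℕ)
    (a : ι → ℝ) :
    ∑ i ∈ s, a i * √(f i : ℝ) = ∑ i ∈ s with ¬p ∣ f i, a i * √(f i : ℝ) +
      √(p : ℝ) * ∑ i ∈ s with p ∣ f i, a i * √((f i / p : ℕ) : ℝ) := by
  rw [← Finset.sum_filter_not_add_sum_filter s (fun i => p ∣ f i), Finset.mul_sum]
  congr 1
  refine Finset.sum_congr rfl fun i hi => ?_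
  rw [Real.sqrt_natCast_eq_sqrt_mul_sqrt_div (Finset.mem_filter.1 hi).2]
  ring

theorem sum_mul_sqrt_eq_zero {ι : Type*} {S : Finset ℕ} (hS : ∀ p ∈ S, p.Prime) {s : Finset ι}
    {f : ι → ℕ} (hf : Set.InjOn f s) (hsf : ∀ i ∈ s, Squarefree (f i))
    (hfS : ∀ i ∈ s, (f i).primeFactors ⊆ S) {a : ι → ℚ}
    (h : ∑ i ∈ s, (a i : ℝ) * √(f i : ℝ) = 0) : ∀ i ∈ s, a i = 0 := by
  induction S using Finset.induction_on generalizing s f a with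
  | empty =>
    intro i hi
    have hf1 : ∀ j ∈ s, f j = 1 := fun j hj =>
      (Nat.primeFactors_eq_empty.1 (Finset.subset_empty.1 (hfS j hj))).resolve_left
        (hsf j hj).ne_zero
    obtain rfl : s = {i} := Finset.eq_singleton_iff_unique_mem.2
      ⟨hi, fun j hj => hf hj hi ((hf1 j hj).trans (hf1 i hi).symm)⟩
    simpa [hf1 i hi] using h
  | insert p S hpS ih =>
    have hS' : ∀ r ∈ S, r.Prime := fun r hr => hS r (Finset.mem_insert_of_mem hr)
    have hfS₁ : ∀ i ∈ {i ∈ s | ¬p ∣ f i}, (f i).primeFactors ⊆ S := fun i hi =>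
      have hi := Finset.mem_filter.1 hi
      Nat.primeFactors_subset_of_not_dvd (hfS i hi.1) hi.2
    have hfS₂ : ∀ i ∈ {i ∈ s | p ∣ f i}, (f i / p).primeFactors ⊆ S := fun i hi =>
      have hi := Finset.mem_filter.1 hi
      (hsf i hi.1).primeFactors_div_subset hi.2 (hfS i hi.1)
    rw [sum_mul_sqrt_eq_add_sqrt_mul p] at h
    obtain ⟨hA, hB⟩ := eq_zero_and_eq_zero_of_add_sqrt_mul_eq_zero hS'
      (hS p (Finset.mem_insert_self p S)) hpS
      (Subfield.sum_mem _ fun i hi =>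
        mul_mem (SubfieldClass.ratCast_mem _ _) (sqrt_mem_sqrtField (hfS₁ i hi)))
      (Subfield.sum_mem _ fun i hi =>
        mul_mem (SubfieldClass.ratCast_mem _ _) (sqrt_mem_sqrtField (hfS₂ i hi))) h
    intro i hi
    by_cases hpi : p ∣ f i
    · refine ih hS' (f := fun i => f i / p) ?_ ?_ hfS₂ hB i (Finset.mem_filter.2 ⟨hi, hpi⟩)
      · intro x hx y hy hxy
        rw [Finset.mem_coe, Finset.mem_filter] at hx hy
        exact hf hx.1 hy.1 ((Nat.div_left_inj hx.2 hy.2).1 hxy)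
      · intro j hj
        rw [Finset.mem_filter] at hj
        exact (hsf j hj.1).squarefree_of_dvd (Nat.div_dvd_of_dvd hj.2)
    · exact ih hS' (hf.mono (Finset.filter_subset _ s))
        (fun j hj => hsf j (Finset.mem_filter.1 hj).1) hfS₁ hA i (Finset.mem_filter.2 ⟨hi, hpi⟩)

theorem linearIndependent_sqrt_of_squarefree {ι : Type*} {f : ι → ℕ} (hf : Function.Injective f)
    (hsf : ∀ i, Squarefree (f i)) : LinearIndependent ℚ fun i => √(f i : ℝ) := by
  rw [linearIndependent_iff']
  intro s a h
  refine sum_mul_sqrt_eq_zero (S := s.biUnion fun i => (f i).primeFactors) ?_ hf.injOn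
    (fun i _ => hsf i) (fun i hi => Finset.subset_biUnion_of_mem (fun i => (f i).primeFactors) hi)
    (by simpa [Rat.smul_def] using h)
  intro p hp
  obtain ⟨i, -, hpi⟩ := Finset.mem_biUnion.1 hp
  exact Nat.prime_of_mem_primeFactors hpi

theorem pairing_zero {d : ℕ} (c : Fin d → ℝ) : pairing c 0 = 0 := by
  simp [pairing]

theorem pairing_ne_zero {d : ℕ} {c : Fin d → ℝ} (hc : LinearIndependent ℚ c) {x : Fin d → ℤ}
    (hx : x ≠ 0) : pairing c x ≠ 0 := by
  contrapose! hx
  funext i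
  refine Fintype.linearIndependent_iff.1 (hc.restrict_scalars' ℤ) x ?_ i
  simpa [pairing, zsmul_eq_mul, mul_comm] using hx

theorem zero_mem_Aperp {d : ℕ} (kk : ℕ) (c : ℕ → Fin d → ℝ) : 0 ∈ Aperp kk c :=
  fun j _ _ => pairing_zero (c j)

section Lset

variable {d : ℕ} {Z0 : Set (Fin d → ℤ)}

theorem zero_mem_Lset_one : (0 : Fin d → ℤ) ∈ Lset 1 Z0 :=
  ⟨Fin.elim0, fun i => i.elim0, by simp⟩

theorem add_mem_Lset {r : ℕ} {l z : Fin d → ℤ} (hl : l ∈ Lset (r + 1) Z0) (hz : z ∈ Z0) :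
    z + l ∈ Lset (r + 2) Z0 := by
  obtain ⟨f, hf, rfl⟩ := hl
  exact ⟨Fin.cons z f, Fin.cases hz hf, (Fin.sum_cons z f).symm⟩

theorem mem_Lset_of_two_le {kk : ℕ} (hk : 2 ≤ kk) {u : Fin d → ℤ} (hu : u ∈ Z0) (hneg : -u ∈ Z0)
    (htwo : u + u ∈ Z0) : u ∈ Lset kk Z0 := by
  obtain ⟨r, rfl⟩ := Nat.exists_eq_add_of_le' hk
  clear hk
  have hu2 : u ∈ Lset 2 Z0 := by simpa using add_mem_Lset zero_mem_Lset_one hu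
  have hu3 : u ∈ Lset 3 Z0 := by
    simpa using add_mem_Lset (add_mem_Lset zero_mem_Lset_one htwo) hneg
  induction r using Nat.twoStepInduction with
  | zero => exact hu2
  | one => exact hu3
  | more r ih _ => simpa using add_mem_Lset (add_mem_Lset ih hu) hneg

end Lset

theorem AddSubgroup.closure_range_single_one (ι : Type*) [Finite ι] [DecidableEq ι] :
    AddSubgroup.closure (Set.range fun i : ι => Pi.single i (1 : ℤ)) = ⊤ := by
  rw [← Submodule.span_int_eq_addSubgroupClosure, Submodule.toAddSubgroup_eq_top]
  rw [← funext (Pi.basisFun_apply ℤ ι)]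
  exact (Pi.basisFun ℤ ι).span_eq

theorem single_mem_stdZ0 {d : ℕ} (i : Fin d) {t : ℤ} (ht : t = 1 ∨ t = -1 ∨ t = 2 ∨ t = -2) :
    Pi.single i t ∈ stdZ0 d :=
  ⟨i, by rcases ht with rfl | rfl | rfl | rfl <;> simp [Pi.single_neg]⟩

theorem zero_notMem_stdZ0 {d : ℕ} : (0 : Fin d → ℤ) ∉ stdZ0 d := by
  rintro ⟨i, h | h | h | h⟩ <;> simpa using congrFun h i

theorem single_mem_Lset_stdZ0 {d kk : ℕ} (hk : 2 ≤ kk) (i : Fin d) {ε : ℤ}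
    (hε : ε = 1 ∨ ε = -1) : Pi.single i ε ∈ Lset kk (stdZ0 d) := by
  refine mem_Lset_of_two_le hk (single_mem_stdZ0 i ?_) ?_ ?_
  · tauto
  · rw [← Pi.single_neg]
    exact single_mem_stdZ0 i (by rcases hε with rfl | rfl <;> norm_num)
  · rw [← Pi.single_add]
    exact single_mem_stdZ0 i (by rcases hε with rfl | rfl <;> norm_num)

section Zinf

variable {d kk : ℕ} {ck : Fin d → ℝ} {Z0 : Set (Fin d → ℤ)}

theorem subset_Zinf : Z0 ⊆ Zinf kk ck Z0 :=
  fun _ hz => Set.mem_iUnion.2 ⟨0, hz⟩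

theorem ne_zero_of_mem_Zinf (hZ0 : (0 : Fin d → ℤ) ∉ Z0) {x : Fin d → ℤ}
    (hx : x ∈ Zinf kk ck Z0) : x ≠ 0 := by
  rintro rfl
  obtain ⟨n, hn⟩ := Set.mem_iUnion.1 hx
  cases n with
  | zero => exact hZ0 hn
  | succ n =>
    obtain ⟨_, _, _, _, _, hpair⟩ := hn
    exact hpair (pairing_zero ck)

theorem add_mem_Zinf {κ l : Fin d → ℤ} (hκ : κ ∈ Zinf kk ck Z0) (hl : l ∈ Lset kk Z0)
    (hpair : pairing ck (κ + l) ≠ 0) : κ + l ∈ Zinf kk ck Z0 := by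
  obtain ⟨n, hn⟩ := Set.mem_iUnion.1 hκ
  exact Set.mem_iUnion.2 ⟨n + 1, κ, hn, l, hl, rfl, hpair⟩

theorem mem_Zinf_of_ne_zero {G : Set (Fin d → ℤ)} (hG : AddSubgroup.closure G = ⊤)
    (hGZ0 : ∀ g ∈ G, g ∈ Z0 ∧ -g ∈ Z0) (hGL : ∀ g ∈ G, g ∈ Lset kk Z0 ∧ -g ∈ Lset kk Z0)
    (hck : ∀ x : Fin d → ℤ, x ≠ 0 → pairing ck x ≠ 0) {x : Fin d → ℤ} (hx : x ≠ 0) :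
    x ∈ Zinf kk ck Z0 := by
  have step : ∀ g ∈ Z0, g ∈ Lset kk Z0 → ∀ y, y = 0 ∨ y ∈ Zinf kk ck Z0 →
      g + y = 0 ∨ g + y ∈ Zinf kk ck Z0 := by
    rintro g hg hgL y (rfl | hy)
    · exact Or.inr (by simpa using subset_Zinf hg)
    by_cases h0 : g + y = 0
    · exact Or.inl h0
    · rw [add_comm] at h0 ⊢
      exact Or.inr (add_mem_Zinf hy hgL (hck _ h0))
  have hmem : ∀ y ∈ AddSubgroup.closure G, y = 0 ∨ y ∈ Zinf kk ck Z0 := by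
    intro y hy
    induction hy using AddSubgroup.closure_induction_left with
    | zero => exact Or.inl rfl
    | add_left g hg y _ hy => exact step g (hGZ0 g hg).1 (hGL g hg).1 y hy
    | neg_add_cancel g hg y _ hy => exact step (-g) (hGZ0 g hg).2 (hGL g hg).2 y hy
  exact (hmem x (hG ▸ AddSubgroup.mem_top x)).resolve_left hx

end Zinf

theorem Zinf_stdZ0 {d kk : ℕ} (hk : 2 ≤ kk) {ck : Fin d → ℝ}
    (hck : ∀ x : Fin d → ℤ, x ≠ 0 → pairing ck x ≠ 0) :
    Zinf kk ck (stdZ0 d) = {k | k ≠ 0} := by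
  ext x
  refine ⟨ne_zero_of_mem_Zinf zero_notMem_stdZ0, mem_Zinf_of_ne_zero
    (AddSubgroup.closure_range_single_one (Fin d)) ?_ ?_ hck⟩
  · rintro _ ⟨i, rfl⟩
    rw [← Pi.single_neg]
    exact ⟨single_mem_stdZ0 i (by norm_num), single_mem_stdZ0 i (by norm_num)⟩
  · rintro _ ⟨i, rfl⟩
    rw [← Pi.single_neg]
    exact ⟨single_mem_Lset_stdZ0 hk i (by norm_num), single_mem_Lset_stdZ0 hk i (by norm_num)⟩

theorem statement9_general {d kk : ℕ} (hk : 2 ≤ kk)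
    (c : ℕ → Fin d → ℝ) (n : Fin d → ℕ)
    (hsf : ∀ i, Squarefree (n i))
    (hdist : Function.Injective n)
    (hck : c kk = fun i => Real.sqrt (n i))
    (Z0 : Set (Fin d → ℤ)) (hZ0 : Z0 = stdZ0 d) :
    Zinf kk (c kk) Z0 = {k : Fin d → ℤ | k ≠ 0} ∧
    ∀ k : Fin d → ℤ, k ∉ Zinf kk (c kk) Z0 → k ∈ Aperp kk c := by
  subst hZ0
  have hpair : ∀ x : Fin d → ℤ, x ≠ 0 → pairing (c kk) x ≠ 0 := fun _ hx =>
    hck ▸ pairing_ne_zero (linearIndependent_sqrt_of_squarefree hdist hsf) hx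
  have hZinf := Zinf_stdZ0 hk hpair
  refine ⟨hZinf, fun k hk' => ?_⟩
  obtain rfl : k = 0 := by simpa [hZinf] using hk'
  exact zero_mem_Aperp kk c

/-- Example 1.8, conclusion: if `𝒵₀ = {ς_i, −ς_i, 2ς_i, −2ς_i}` and
`c_𝕜 = (√n₁, …, √n_d)` with `n₁, …, n_d` pairwise distinct squarefree positive
integers (the vectors `c_1, …, c_{𝕜−1}` being arbitrary), then `𝒵_∞ = ℤ^d \ {0}`
and in particular the Hörmander-type condition `ℤ^d \ 𝒵_∞ ⊆ A^⊥` holds. -/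
theorem statement9 {d kk : ℕ} (hd : 1 ≤ d) (hk : 2 ≤ kk)
    (c : ℕ → Fin d → ℝ) (n : Fin d → ℕ)
    (hpos : ∀ i, 0 < n i) (hsf : ∀ i, Squarefree (n i))
    (hdist : Function.Injective n)
    (hck : c kk = fun i => Real.sqrt (n i))
    (Z0 : Set (Fin d → ℤ)) (hZ0 : Z0 = stdZ0 d) :
    Zinf kk (c kk) Z0 = {k : Fin d → ℤ | k ≠ 0} ∧
    ∀ k : Fin d → ℤ, k ∉ Zinf kk (c kk) Z0 → k ∈ Aperp kk c :=
  statement9_general hk c n hsf hdist hck Z0 hZ0
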